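/- Let 𝐇 be a conditional entropy, let ρ_{AB} be a bipartite state, and let 𝒰 be an isometric channel from A to A' and 𝒱 an isometric channel from B to B'. Then 𝐇(A'|B')_{(𝒰⊗𝒱)(ρ_{AB})} = 𝐇(A|B)_{ρ_{AB}}. -/

import Mathlib

open Matrix Kronecker BigOperators
open scoped ENNReal ComplexOrder

noncomputable section

/-- A quantum state: a positive semidefinite matrix of trace one. -/
def IsState {α : Type} [Fintype α] (ρ : Matrix α α ℂ) : Prop :=
  ρ.PosSemidef ∧ ρ.trace = 1

/-- The Choi matrix `∑ i j, E i j ⊗ N (E i j)` of a map between matrix algebras. -/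
def choiMatrix {α β : Type} [Fintype α] [DecidableEq α] [Fintype β]
    (N : Matrix α α ℂ → Matrix β β ℂ) : Matrix (α × β) (α × β) ℂ :=
  ∑ i : α, ∑ j : α, Matrix.single i j (1 : ℂ) ⊗ₖ N (Matrix.single i j 1)

/-- A quantum channel: a linear, trace-preserving and completely positive map. -/
def IsChannel {α β : Type} [Fintype α] [DecidableEq α] [Fintype β]
    (N : Matrix α α ℂ → Matrix β β ℂ) : Prop :=
  IsLinearMap ℂ N ∧ (∀ X, (N X).trace = X.trace) ∧ (choiMatrix N).PosSemidef

/-- Partial trace over the first tensor factor. -/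
def trA {α β : Type} [Fintype α] (ρ : Matrix (α × β) (α × β) ℂ) : Matrix β β ℂ :=
  Matrix.of fun j j' => ∑ i : α, ρ (i, j) (i, j')

/-- The uniform (maximally mixed) state of dimension `n`. -/
def unif (n : ℕ) : Matrix (Fin n) (Fin n) ℂ := (n : ℂ)⁻¹ • 1

/-- The tensor extension `M ⊗ id` of a map `M` acting on the first factor. -/
def tensorIdRight {a a' : ℕ} (b : ℕ)
    (M : Matrix (Fin a) (Fin a) ℂ → Matrix (Fin a') (Fin a') ℂ)
    (X : Matrix (Fin a × Fin b) (Fin a × Fin b) ℂ) :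
    Matrix (Fin a' × Fin b) (Fin a' × Fin b) ℂ :=
  Matrix.of fun p q => M (Matrix.of fun k k' => X (k, p.2) (k', q.2)) p.1 q.1

/-- A conditionally unital bipartite channel: it sends every state of the form
`u_A ⊗ ρ_B` to a state of the form `u_C ⊗ σ_{B'}`. -/
def CondUnital {a b c b' : ℕ}
    (N : Matrix (Fin a × Fin b) (Fin a × Fin b) ℂ → Matrix (Fin c × Fin b') (Fin c × Fin b') ℂ) :
    Prop :=
  ∀ ρB : Matrix (Fin b) (Fin b) ℂ, IsState ρB →
    ∃ σ : Matrix (Fin b') (Fin b') ℂ, IsState σ ∧ N (unif a ⊗ₖ ρB) = unif c ⊗ₖ σ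

/-- An `A ↛ B'` semi-causal bipartite channel. -/
def SemiCausal {a b c b' : ℕ}
    (N : Matrix (Fin a × Fin b) (Fin a × Fin b) ℂ → Matrix (Fin c × Fin b') (Fin c × Fin b') ℂ) :
    Prop :=
  ∀ M : Matrix (Fin a) (Fin a) ℂ → Matrix (Fin a) (Fin a) ℂ, IsChannel M →
    ∀ X : Matrix (Fin a × Fin b) (Fin a × Fin b) ℂ,
      trA (N (tensorIdRight b M X)) = trA (N X)

/-- A locally balanced channel: a quantum channel that is both conditionally unital
and `A ↛ B'` semi-causal. -/
def LocallyBalanced {a b c b' : ℕ}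
    (N : Matrix (Fin a × Fin b) (Fin a × Fin b) ℂ → Matrix (Fin c × Fin b') (Fin c × Fin b') ℂ) :
    Prop :=
  IsChannel N ∧ CondUnital N ∧ SemiCausal N

/-- Conditional majorization `ρ ≻_A σ` with respect to the first system. -/
def CondMaj {a b a' b' : ℕ}
    (ρ : Matrix (Fin a × Fin b) (Fin a × Fin b) ℂ)
    (σ : Matrix (Fin a' × Fin b') (Fin a' × Fin b') ℂ) : Prop :=
  (a' ≥ a ∧ ∃ (V : Matrix (Fin a') (Fin a) ℂ)
      (N : Matrix (Fin a × Fin b) (Fin a × Fin b) ℂ →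
           Matrix (Fin a × Fin b') (Fin a × Fin b') ℂ),
      Vᴴ * V = 1 ∧ LocallyBalanced N ∧
      σ = (V ⊗ₖ (1 : Matrix (Fin b') (Fin b') ℂ)) * N ρ *
            (V ⊗ₖ (1 : Matrix (Fin b') (Fin b') ℂ))ᴴ) ∨
  (a ≥ a' ∧ ∃ (U : Matrix (Fin a) (Fin a') ℂ)
      (N : Matrix (Fin a × Fin b) (Fin a × Fin b) ℂ →
           Matrix (Fin a × Fin b') (Fin a × Fin b') ℂ),
      Uᴴ * U = 1 ∧ LocallyBalanced N ∧
      (U ⊗ₖ (1 : Matrix (Fin b') (Fin b') ℂ)) * σ *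
          (U ⊗ₖ (1 : Matrix (Fin b') (Fin b') ℂ))ᴴ = N ρ)

/-- Relaxed conditional majorization `ρ ≻^A σ`: as `CondMaj`, with the locally
balanced channel replaced by a mere conditionally unital channel. -/
def RelCondMaj {a b a' b' : ℕ}
    (ρ : Matrix (Fin a × Fin b) (Fin a × Fin b) ℂ)
    (σ : Matrix (Fin a' × Fin b') (Fin a' × Fin b') ℂ) : Prop :=
  (a' ≥ a ∧ ∃ (V : Matrix (Fin a') (Fin a) ℂ)
      (N : Matrix (Fin a × Fin b) (Fin a × Fin b) ℂ →
           Matrix (Fin a × Fin b') (Fin a × Fin b') ℂ),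
      Vᴴ * V = 1 ∧ (IsChannel N ∧ CondUnital N) ∧
      σ = (V ⊗ₖ (1 : Matrix (Fin b') (Fin b') ℂ)) * N ρ *
            (V ⊗ₖ (1 : Matrix (Fin b') (Fin b') ℂ))ᴴ) ∨
  (a ≥ a' ∧ ∃ (U : Matrix (Fin a) (Fin a') ℂ)
      (N : Matrix (Fin a × Fin b) (Fin a × Fin b) ℂ →
           Matrix (Fin a × Fin b') (Fin a × Fin b') ℂ),
      Uᴴ * U = 1 ∧ (IsChannel N ∧ CondUnital N) ∧
      (U ⊗ₖ (1 : Matrix (Fin b') (Fin b') ℂ)) * σ *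
          (U ⊗ₖ (1 : Matrix (Fin b') (Fin b') ℂ))ᴴ = N ρ)

/-- Reordering `(A × B) × (A' × B') ≃ AA' × BB'`. -/
def sysEquiv (a b a' b' : ℕ) :
    (Fin a × Fin b) × (Fin a' × Fin b') ≃ Fin (a * a') × Fin (b * b') :=
  (Equiv.prodProdProdComm (Fin a) (Fin b) (Fin a') (Fin b')).trans
    (finProdFinEquiv.prodCongr finProdFinEquiv)

/-- The tensor product `ρ_{AB} ⊗ σ_{A'B'}` regarded as a bipartite state with
first system `AA'` and second system `BB'`. -/
def tensorState {a b a' b' : ℕ}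
    (ρ : Matrix (Fin a × Fin b) (Fin a × Fin b) ℂ)
    (σ : Matrix (Fin a' × Fin b') (Fin a' × Fin b') ℂ) :
    Matrix (Fin (a * a') × Fin (b * b')) (Fin (a * a') × Fin (b * b')) ℂ :=
  Matrix.reindex (sysEquiv a b a' b') (sysEquiv a b a' b') (ρ ⊗ₖ σ)

/-- Reindexing of a matrix on a product of `Fin` types as a matrix on a single `Fin` type. -/
def mreindex {a b : ℕ} (ρ : Matrix (Fin a × Fin b) (Fin a × Fin b) ℂ) :
    Matrix (Fin (a * b)) (Fin (a * b)) ℂ :=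
  Matrix.reindex finProdFinEquiv finProdFinEquiv ρ

/-- Majorization `ρ ≻ σ` between states of possibly different dimensions. -/
def Maj {n n' : ℕ} (ρ : Matrix (Fin n) (Fin n) ℂ) (σ : Matrix (Fin n') (Fin n') ℂ) : Prop :=
  (n' ≥ n ∧ ∃ (V : Matrix (Fin n') (Fin n) ℂ)
      (N : Matrix (Fin n) (Fin n) ℂ → Matrix (Fin n) (Fin n) ℂ),
      Vᴴ * V = 1 ∧ IsChannel N ∧ N 1 = 1 ∧ σ = V * N ρ * Vᴴ) ∨
  (n ≥ n' ∧ ∃ (U : Matrix (Fin n) (Fin n') ℂ)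
      (N : Matrix (Fin n) (Fin n) ℂ → Matrix (Fin n) (Fin n) ℂ),
      Uᴴ * U = 1 ∧ IsChannel N ∧ N 1 = 1 ∧ U * σ * Uᴴ = N ρ)

/-- The conditional min-entropy
`H_min(A|B)_ρ = - log₂ min {λ ≥ 0 : λ I_A ⊗ ρ_B - ρ_{AB} ≽ 0}`. -/
def condMinEntropy {a b : ℕ} (ρ : Matrix (Fin a × Fin b) (Fin a × Fin b) ℂ) : ℝ :=
  - Real.logb 2 (sInf {l : ℝ | 0 ≤ l ∧
      (l • ((1 : Matrix (Fin a) (Fin a) ℂ) ⊗ₖ trA ρ) - ρ).PosSemidef})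

/-- The conditional min-entropy `H_min^↑(A|B)_ρ`, optimized over states `σ_B`. -/
def condMinEntropyUp {a b : ℕ} (ρ : Matrix (Fin a × Fin b) (Fin a × Fin b) ℂ) : ℝ :=
  sSup {r : ℝ | ∃ σ : Matrix (Fin b) (Fin b) ℂ, IsState σ ∧
    (∃ l : ℝ, 0 ≤ l ∧ (l • ((1 : Matrix (Fin a) (Fin a) ℂ) ⊗ₖ σ) - ρ).PosSemidef) ∧
    r = - Real.logb 2 (sInf {l : ℝ | 0 ≤ l ∧
      (l • ((1 : Matrix (Fin a) (Fin a) ℂ) ⊗ₖ σ) - ρ).PosSemidef})}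

/-- The maximally entangled state of rank `k` on `ℂ^k ⊗ ℂ^k`. -/
def maxEnt (k : ℕ) : Matrix (Fin k × Fin k) (Fin k × Fin k) ℂ :=
  Matrix.of fun p q => if p.1 = p.2 ∧ q.1 = q.2 then (k : ℂ)⁻¹ else 0

/-- The quantum channel on `m × m` matrices induced by a doubly stochastic matrix `D`,
`ρ ↦ ∑ x x', D x' x * ρ x x • E x' x'`. -/
def dsChannel {m : ℕ} (D : Matrix (Fin m) (Fin m) ℝ) :
    Matrix (Fin m) (Fin m) ℂ → Matrix (Fin m) (Fin m) ℂ :=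
  fun ρ => ∑ x : Fin m, ∑ x' : Fin m,
    (((D x' x : ℝ) : ℂ) * ρ x x) • Matrix.single x' x' (1 : ℂ)

/-- A doubly stochastic matrix: nonnegative entries, all row and column sums equal one. -/
def IsDoublyStochastic {m : ℕ} (D : Matrix (Fin m) (Fin m) ℝ) : Prop :=
  (∀ x x', 0 ≤ D x x') ∧ (∀ x, ∑ x', D x x' = 1) ∧ (∀ x', ∑ x, D x x' = 1)

/-- The tensor product `M ⊗ F` of two (linear) maps between matrix algebras. -/
def tensorMap {m m' n n' : ℕ}
    (M : Matrix (Fin m) (Fin m) ℂ → Matrix (Fin m') (Fin m') ℂ)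
    (F : Matrix (Fin n) (Fin n) ℂ → Matrix (Fin n') (Fin n') ℂ) :
    Matrix (Fin m × Fin n) (Fin m × Fin n) ℂ →
      Matrix (Fin m' × Fin n') (Fin m' × Fin n') ℂ :=
  fun X => ∑ k : Fin m, ∑ k' : Fin m, ∑ l : Fin n, ∑ l' : Fin n,
    X (k, l) (k', l') •
      (M (Matrix.single k k' 1) ⊗ₖ F (Matrix.single l l' 1))

/-- A conditional entropy: a real-valued function on all bipartite states of all finite
dimensions that is not identically zero, reverses conditional majorization, and is
additive on tensor products. -/
structure CondEntropy where
  H : ∀ (a b : ℕ), Matrix (Fin a × Fin b) (Fin a × Fin b) ℂ → ℝ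
  nontrivial : ∃ (a b : ℕ) (ρ : Matrix (Fin a × Fin b) (Fin a × Fin b) ℂ),
    IsState ρ ∧ H a b ρ ≠ 0
  mono : ∀ (a b a' b' : ℕ) (ρ : Matrix (Fin a × Fin b) (Fin a × Fin b) ℂ)
    (σ : Matrix (Fin a' × Fin b') (Fin a' × Fin b') ℂ),
    IsState ρ → IsState σ → CondMaj ρ σ → H a b ρ ≤ H a' b' σ
  additive : ∀ (a b a' b' : ℕ) (ρ : Matrix (Fin a × Fin b) (Fin a × Fin b) ℂ)
    (σ : Matrix (Fin a' × Fin b') (Fin a' × Fin b') ℂ),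
    IsState ρ → IsState σ →
    H (a * a') (b * b') (tensorState ρ σ) = H a b ρ + H a' b' σ

/-- A conditional entropy is normalized if `H(A|B) = 1` on `u⁽²⁾ ⊗ ρ_B`. -/
def CondEntropy.Normalized (E : CondEntropy) : Prop :=
  ∀ (b : ℕ) (ρB : Matrix (Fin b) (Fin b) ℂ), IsState ρB →
    E.H 2 b (unif 2 ⊗ₖ ρB) = 1

/-- A relaxed conditional entropy: as `CondEntropy`, but monotone under the relaxed
conditional majorization. -/
structure RelCondEntropy where
  H : ∀ (a b : ℕ), Matrix (Fin a × Fin b) (Fin a × Fin b) ℂ → ℝ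
  nontrivial : ∃ (a b : ℕ) (ρ : Matrix (Fin a × Fin b) (Fin a × Fin b) ℂ),
    IsState ρ ∧ H a b ρ ≠ 0
  mono : ∀ (a b a' b' : ℕ) (ρ : Matrix (Fin a × Fin b) (Fin a × Fin b) ℂ)
    (σ : Matrix (Fin a' × Fin b') (Fin a' × Fin b') ℂ),
    IsState ρ → IsState σ → RelCondMaj ρ σ → H a b ρ ≤ H a' b' σ
  additive : ∀ (a b a' b' : ℕ) (ρ : Matrix (Fin a × Fin b) (Fin a × Fin b) ℂ)
    (σ : Matrix (Fin a' × Fin b') (Fin a' × Fin b') ℂ),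
    IsState ρ → IsState σ →
    H (a * a') (b * b') (tensorState ρ σ) = H a b ρ + H a' b' σ

/-- A relaxed conditional entropy is normalized if `H(A|B) = 1` on `u⁽²⁾ ⊗ ρ_B`. -/
def RelCondEntropy.Normalized (E : RelCondEntropy) : Prop :=
  ∀ (b : ℕ) (ρB : Matrix (Fin b) (Fin b) ℂ), IsState ρB →
    E.H 2 b (unif 2 ⊗ₖ ρB) = 1

/-- An entropy: a real-valued function on all states of all finite dimensions that is
not identically zero, reverses majorization, and is additive on tensor products. -/
structure Entropy where
  H : ∀ (n : ℕ), Matrix (Fin n) (Fin n) ℂ → ℝ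
  nontrivial : ∃ (n : ℕ) (ρ : Matrix (Fin n) (Fin n) ℂ), IsState ρ ∧ H n ρ ≠ 0
  mono : ∀ (n n' : ℕ) (ρ : Matrix (Fin n) (Fin n) ℂ) (σ : Matrix (Fin n') (Fin n') ℂ),
    IsState ρ → IsState σ → Maj ρ σ → H n ρ ≤ H n' σ
  additive : ∀ (n n' : ℕ) (ρ : Matrix (Fin n) (Fin n) ℂ) (σ : Matrix (Fin n') (Fin n') ℂ),
    IsState ρ → IsState σ → H (n * n') (mreindex (ρ ⊗ₖ σ)) = H n ρ + H n' σ

/-- A relative entropy: an `[0,∞]`-valued function on pairs of states of equal dimension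
that is not identically zero, monotone under quantum channels, and additive on
tensor products. -/
structure RelEntropy where
  D : ∀ (n : ℕ), Matrix (Fin n) (Fin n) ℂ → Matrix (Fin n) (Fin n) ℂ → ℝ≥0∞
  nontrivial : ∃ (n : ℕ) (ρ σ : Matrix (Fin n) (Fin n) ℂ),
    IsState ρ ∧ IsState σ ∧ D n ρ σ ≠ 0
  mono : ∀ (n m : ℕ) (N : Matrix (Fin n) (Fin n) ℂ → Matrix (Fin m) (Fin m) ℂ),
    IsChannel N → ∀ ρ σ : Matrix (Fin n) (Fin n) ℂ,
      IsState ρ → IsState σ → D m (N ρ) (N σ) ≤ D n ρ σ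
  additive : ∀ (n m : ℕ) (ρ σ : Matrix (Fin n) (Fin n) ℂ) (ω τ : Matrix (Fin m) (Fin m) ℂ),
    IsState ρ → IsState σ → IsState ω → IsState τ →
    D (n * m) (mreindex (ρ ⊗ₖ ω)) (mreindex (σ ⊗ₖ τ)) = D n ρ σ + D m ω τ


/-- The conditional entropy `log₂|A| − 𝐃(ρ_{AB} ‖ u_A ⊗ ρ_B)` induced by a relative
entropy `𝐃`, valued in the extended reals. -/
def RelEntropy.condH (Dd : RelEntropy) (a b : ℕ)
    (ρ : Matrix (Fin a × Fin b) (Fin a × Fin b) ℂ) : EReal :=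
  ((Real.logb 2 a : ℝ) : EReal) -
    ((Dd.D (a * b) (mreindex ρ) (mreindex (unif a ⊗ₖ trA ρ)) : ℝ≥0∞) : EReal)

/-!
Both inequalities come from monotonicity under conditional majorization. The state
`σ = (V ⊗ W) ρ (V ⊗ W)ᴴ` arises from `ρ` by the locally balanced channel `id ⊗ (W · Wᴴ)`
followed by the isometry `V` on the first system. Conversely, `(V ⊗ 1) ρ (V ⊗ 1)ᴴ` is the image
of `σ` under `X ↦ (1 ⊗ Wᴴ) X (1 ⊗ W) + Tr[(1 - 1 ⊗ W Wᴴ) X] u ⊗ u`, which undoes `W` on its range;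
this channel is locally balanced because the marginal of its output on the second system
depends only on the marginal of its input there.
-/

section Matrices

variable {α β γ : Type}

lemma Matrix.PosSemidef.trace_mul_nonneg [Fintype α] {P X : Matrix α α ℂ} (hP : P.PosSemidef)
    (hX : X.PosSemidef) : 0 ≤ (P * X).trace := by
  classical
  open scoped MatrixOrder in
  obtain ⟨B, rfl⟩ := CStarAlgebra.nonneg_iff_eq_star_mul_self.mp hP.nonneg
  rw [star_eq_conjTranspose, Matrix.mul_assoc, trace_mul_comm]
  exact (hX.mul_mul_conjTranspose_same B).trace_nonneg

lemma posSemidef_one_sub_conjTranspose_mul [Fintype α] [Fintype β] [DecidableEq α]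
    [DecidableEq β] {K : Matrix β α ℂ} (hK : K * Kᴴ = 1) : (1 - Kᴴ * K).PosSemidef := by
  have hproj : IsStarProjection (Kᴴ * K) := by
    refine ⟨?_, ?_⟩
    · rw [IsIdempotentElem, Matrix.mul_assoc, ← Matrix.mul_assoc K, hK, Matrix.one_mul]
    · rw [IsSelfAdjoint, star_eq_conjTranspose, conjTranspose_mul, conjTranspose_conjTranspose]
  open scoped MatrixOrder in
  exact nonneg_iff_posSemidef.mp hproj.one_sub_nonneg

lemma conjTranspose_one_kronecker [DecidableEq α] (W : Matrix β γ ℂ) :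
    ((1 : Matrix α α ℂ) ⊗ₖ W)ᴴ = 1 ⊗ₖ Wᴴ := by
  rw [conjTranspose_kronecker, conjTranspose_one]

lemma one_kronecker_isometry [Fintype α] [Fintype β] [DecidableEq α] [DecidableEq γ]
    {W : Matrix β γ ℂ} (hW : Wᴴ * W = 1) :
    ((1 : Matrix α α ℂ) ⊗ₖ W)ᴴ * ((1 : Matrix α α ℂ) ⊗ₖ W) = 1 := by
  rw [conjTranspose_one_kronecker, ← mul_kronecker_mul, hW, Matrix.one_mul, one_kronecker_one]

lemma isState_unif {n : ℕ} (hn : 0 < n) : IsState (unif n) := by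
  refine ⟨PosSemidef.one.smul (by positivity), ?_⟩
  simp [unif, trace_smul, trace_one, Nat.cast_ne_zero.mpr hn.ne']

lemma IsState.nonempty [Fintype α] {ρ : Matrix α α ℂ} (hρ : IsState ρ) : Nonempty α := by
  by_contra h
  rw [not_nonempty_iff] at h
  simpa [trace] using hρ.2

lemma IsState.kronecker [Fintype α] [Fintype β] {ρ : Matrix α α ℂ} {σ : Matrix β β ℂ}
    (hρ : IsState ρ) (hσ : IsState σ) : IsState (ρ ⊗ₖ σ) :=
  ⟨hρ.1.kronecker hσ.1, by rw [trace_kronecker, hρ.2, hσ.2, one_mul]⟩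

lemma IsState.conj_isometry [Fintype α] [Fintype β] [DecidableEq α] {ρ : Matrix α α ℂ}
    (hρ : IsState ρ) {K : Matrix β α ℂ} (hK : Kᴴ * K = 1) : IsState (K * ρ * Kᴴ) :=
  ⟨hρ.1.mul_mul_conjTranspose_same K, by rw [trace_mul_cycle, hK, Matrix.one_mul, hρ.2]⟩

lemma card_le_of_isometry {a a' : ℕ} {V : Matrix (Fin a') (Fin a) ℂ} (hV : Vᴴ * V = 1) :
    a ≤ a' :=
  calc a = (Vᴴ * V).rank := by rw [hV, rank_one, Fintype.card_fin]
    _ ≤ V.rank := rank_mul_le_right _ _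
    _ ≤ a' := rank_le_height V

end Matrices

section PartialTrace

variable {α β γ : Type} [Fintype α]

lemma trA_add (X Y : Matrix (α × β) (α × β) ℂ) : trA (X + Y) = trA X + trA Y := by
  ext j j'; simp [trA, Finset.sum_add_distrib]

lemma trA_smul (c : ℂ) (X : Matrix (α × β) (α × β) ℂ) : trA (c • X) = c • trA X := by
  ext j j'; simp [trA, Finset.mul_sum]

lemma trace_trA [Fintype β] (X : Matrix (α × β) (α × β) ℂ) : (trA X).trace = X.trace := by
  simp only [trace, diag, trA, of_apply, Fintype.sum_prod_type]
  exact Finset.sum_comm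

lemma trA_one_kronecker_mul_mul [Fintype β] [DecidableEq α] (A : Matrix γ β ℂ)
    (X : Matrix (α × β) (α × β) ℂ) (B : Matrix β γ ℂ) :
    trA (((1 : Matrix α α ℂ) ⊗ₖ A) * X * ((1 : Matrix α α ℂ) ⊗ₖ B)) = A * trA X * B := by
  ext j j'
  simp only [trA, Matrix.mul_apply, kroneckerMap_apply, Matrix.one_apply, ite_mul, one_mul,
    zero_mul, Fintype.sum_prod_type, Finset.sum_ite_irrel, Finset.sum_const_zero,
    Finset.sum_ite_eq, Finset.mem_univ, ↓reduceIte, mul_ite, Finset.sum_mul, mul_zero,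
    Finset.sum_ite_eq', of_apply, Finset.mul_sum]
  rw [Finset.sum_comm]
  exact Finset.sum_congr rfl fun _ _ => Finset.sum_comm

lemma trace_one_kronecker_mul [Fintype β] [DecidableEq α] [DecidableEq β] (Q : Matrix β β ℂ)
    (X : Matrix (α × β) (α × β) ℂ) :
    (((1 : Matrix α α ℂ) ⊗ₖ Q) * X).trace = (Q * trA X).trace := by
  rw [← trace_trA, ← Matrix.mul_one (_ * X), ← one_kronecker_one, trA_one_kronecker_mul_mul,
    Matrix.mul_one]

lemma trA_tensorIdRight {a b : ℕ} {M : Matrix (Fin a) (Fin a) ℂ → Matrix (Fin a) (Fin a) ℂ}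
    (hM : ∀ X, (M X).trace = X.trace) (X : Matrix (Fin a × Fin b) (Fin a × Fin b) ℂ) :
    trA (tensorIdRight b M X) = trA X := by
  ext j j'
  simpa [trA, tensorIdRight, trace, diag] using hM (of fun k k' => X (k, j) (k', j'))

end PartialTrace

section Channels

variable {α β γ : Type} [Fintype α] [DecidableEq α] [Fintype β]

lemma choiMatrix_apply (N : Matrix α α ℂ → Matrix β β ℂ) (p q : α × β) :
    choiMatrix N p q = N (single p.1 q.1 1) p.2 q.2 := by
  simp [choiMatrix, Matrix.sum_apply, single_apply, ite_and]

lemma choiMatrix_add (N M : Matrix α α ℂ → Matrix β β ℂ) :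
    choiMatrix (fun X => N X + M X) = choiMatrix N + choiMatrix M := by
  ext p q
  simp only [Matrix.add_apply, choiMatrix_apply]

lemma choiMatrix_conj (K : Matrix β α ℂ) :
    choiMatrix (fun X => K * X * Kᴴ) =
      vecMulVec (fun p => K p.2 p.1) (star fun p => K p.2 p.1) := by
  ext p q
  simp [choiMatrix_apply, vecMulVec_apply, mul_apply, single_apply, ite_and]

lemma choiMatrix_trace_smul (P : Matrix α α ℂ) (τ : Matrix β β ℂ) :
    choiMatrix (fun X => (P * X).trace • τ) = Pᵀ ⊗ₖ τ := by
  ext p q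
  simp [choiMatrix_apply, trace_mul_single]

lemma isChannel_conj {K : Matrix β α ℂ} (hK : Kᴴ * K = 1) :
    IsChannel (fun X : Matrix α α ℂ => K * X * Kᴴ) :=
  ⟨⟨fun X Y => by rw [Matrix.mul_add, Matrix.add_mul],
      fun c X => by rw [Matrix.mul_smul, Matrix.smul_mul]⟩,
    fun X => by rw [trace_mul_cycle, hK, Matrix.one_mul],
    choiMatrix_conj K ▸ posSemidef_vecMulVec_self_star _⟩

def completedConj (K : Matrix β α ℂ) (τ : Matrix β β ℂ) (X : Matrix α α ℂ) : Matrix β β ℂ :=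
  K * X * Kᴴ + ((1 - Kᴴ * K) * X).trace • τ

lemma isChannel_completedConj {K : Matrix β α ℂ} (hK : (1 - Kᴴ * K).PosSemidef)
    {τ : Matrix β β ℂ} (hτ : IsState τ) : IsChannel (completedConj K τ) := by
  refine ⟨⟨fun X Y => ?_, fun c X => ?_⟩, fun X => ?_, ?_⟩
  · simp only [completedConj, Matrix.mul_add, Matrix.add_mul, trace_add, add_smul]
    abel
  · simp only [completedConj, Matrix.mul_smul, Matrix.smul_mul, trace_smul, smul_eq_mul,
      smul_add, smul_smul]
  · rw [completedConj, trace_add, trace_smul, hτ.2, smul_eq_mul, mul_one, Matrix.sub_mul,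
      trace_sub, Matrix.one_mul, trace_mul_cycle, Matrix.mul_assoc]
    ring
  · rw [show completedConj K τ = fun X => K * X * Kᴴ + ((1 - Kᴴ * K) * X).trace • τ from rfl,
      choiMatrix_add, choiMatrix_trace_smul]
    exact (choiMatrix_conj K ▸ posSemidef_vecMulVec_self_star _).add
      (hK.transpose.kronecker hτ.1)

lemma completedConj_conj [Fintype γ] {K : Matrix β α ℂ} {L : Matrix α γ ℂ}
    (hL : Kᴴ * K * L = L) (τ : Matrix β β ℂ) (X : Matrix γ γ ℂ) :
    completedConj K τ (L * X * Lᴴ) = K * L * X * (K * L)ᴴ := by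
  have hlost : (1 - Kᴴ * K) * (L * X * Lᴴ) = 0 := by
    rw [Matrix.sub_mul, Matrix.one_mul, ← Matrix.mul_assoc, ← Matrix.mul_assoc, hL, sub_self]
  rw [completedConj, hlost, trace_zero, zero_smul, add_zero, conjTranspose_mul]
  simp only [Matrix.mul_assoc]

lemma IsState.completedConj {ρ : Matrix α α ℂ} (hρ : IsState ρ) {K : Matrix β α ℂ}
    (hK : (1 - Kᴴ * K).PosSemidef) {τ : Matrix β β ℂ} (hτ : IsState τ) :
    IsState (completedConj K τ ρ) :=
  ⟨(hρ.1.mul_mul_conjTranspose_same K).add (hτ.1.smul (hK.trace_mul_nonneg hρ.1)),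
    ((isChannel_completedConj hK hτ).2.1 ρ).trans hρ.2⟩

lemma completedConj_one_kronecker_kronecker [Fintype γ] [DecidableEq γ] (K : Matrix β α ℂ)
    {σ : Matrix γ γ ℂ} (hσ : σ.trace = 1) (τ : Matrix β β ℂ) (ρ : Matrix α α ℂ) :
    completedConj ((1 : Matrix γ γ ℂ) ⊗ₖ K) (σ ⊗ₖ τ) (σ ⊗ₖ ρ) =
      σ ⊗ₖ completedConj K τ ρ := by
  simp only [completedConj, conjTranspose_kronecker, conjTranspose_one, ← mul_kronecker_mul,
    Matrix.mul_one, Matrix.sub_mul, trace_sub, trace_kronecker, hσ,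
    kronecker_add, kronecker_smul, one_mul]

end Channels

section LocallyBalanced

variable {a b b' : ℕ}

lemma semiCausal_of_trA_eq {c : ℕ}
    {N : Matrix (Fin a × Fin b) (Fin a × Fin b) ℂ → Matrix (Fin c × Fin b') (Fin c × Fin b') ℂ}
    (f : Matrix (Fin b) (Fin b) ℂ → Matrix (Fin b') (Fin b') ℂ)
    (hf : ∀ X, trA (N X) = f (trA X)) : SemiCausal N :=
  fun _ hM X => by rw [hf, hf, trA_tensorIdRight hM.2.1]

lemma locallyBalanced_one_kronecker_conj {W : Matrix (Fin b') (Fin b) ℂ} (hW : Wᴴ * W = 1) :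
    LocallyBalanced fun X : Matrix (Fin a × Fin b) (Fin a × Fin b) ℂ =>
      ((1 : Matrix (Fin a) (Fin a) ℂ) ⊗ₖ W) * X * ((1 : Matrix (Fin a) (Fin a) ℂ) ⊗ₖ W)ᴴ := by
  refine ⟨isChannel_conj (one_kronecker_isometry hW),
    fun ρB hρB => ⟨W * ρB * Wᴴ, hρB.conj_isometry hW, ?_⟩,
    semiCausal_of_trA_eq (fun Y => W * Y * Wᴴ) fun X => ?_⟩
  · beta_reduce
    rw [conjTranspose_one_kronecker, ← mul_kronecker_mul, ← mul_kronecker_mul, Matrix.one_mul,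
      Matrix.mul_one]
  · rw [conjTranspose_one_kronecker, trA_one_kronecker_mul_mul]

lemma locallyBalanced_completedConj (ha : 0 < a) (hb : 0 < b) {W : Matrix (Fin b') (Fin b) ℂ}
    (hW : Wᴴ * W = 1) :
    LocallyBalanced
      (completedConj ((1 : Matrix (Fin a) (Fin a) ℂ) ⊗ₖ Wᴴ) (unif a ⊗ₖ unif b)) := by
  set K := (1 : Matrix (Fin a) (Fin a) ℂ) ⊗ₖ Wᴴ with hK_def
  have hK_conj : Kᴴ = 1 ⊗ₖ W := by
    rw [hK_def, conjTranspose_one_kronecker, conjTranspose_conjTranspose]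
  have hK : K * Kᴴ = 1 := by
    rw [hK_conj, hK_def, ← mul_kronecker_mul, hW, Matrix.one_mul, one_kronecker_one]
  have hWcoiso : Wᴴ * Wᴴᴴ = 1 := by rwa [conjTranspose_conjTranspose]
  have hlost : ∀ X, ((1 - Kᴴ * K) * X).trace = (trA X).trace - (W * Wᴴ * trA X).trace := by
    intro X
    rw [hK_conj, hK_def, ← mul_kronecker_mul, Matrix.one_mul, Matrix.sub_mul, trace_sub,
      Matrix.one_mul, trace_one_kronecker_mul, trace_trA]
  refine ⟨isChannel_completedConj (posSemidef_one_sub_conjTranspose_mul hK)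
      ((isState_unif ha).kronecker (isState_unif hb)),
    fun ρB hρB => ⟨completedConj Wᴴ (unif b) ρB,
      hρB.completedConj (posSemidef_one_sub_conjTranspose_mul hWcoiso) (isState_unif hb),
      completedConj_one_kronecker_kronecker _ (isState_unif ha).2 _ _⟩,
    semiCausal_of_trA_eq
      (fun Y => Wᴴ * Y * W + (Y.trace - (W * Wᴴ * Y).trace) • trA (unif a ⊗ₖ unif b))
      fun X => ?_⟩
  rw [completedConj, trA_add, trA_smul, hlost, hK_conj, hK_def, trA_one_kronecker_mul_mul]

end LocallyBalanced

/-- Every conditional entropy is invariant under local isometric channels. -/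
theorem condEntropy_local_isometry_invariant (E : CondEntropy) (a b a' b' : ℕ)
    (ρ : Matrix (Fin a × Fin b) (Fin a × Fin b) ℂ) (hρ : IsState ρ)
    (V : Matrix (Fin a') (Fin a) ℂ) (hV : Vᴴ * V = 1)
    (W : Matrix (Fin b') (Fin b) ℂ) (hW : Wᴴ * W = 1) :
    E.H a' b' ((V ⊗ₖ W) * ρ * (V ⊗ₖ W)ᴴ) = E.H a b ρ := by
  obtain ⟨i, j⟩ := hρ.nonempty
  have haa' : a ≤ a' := card_le_of_isometry hV
  have hσ : IsState ((V ⊗ₖ W) * ρ * (V ⊗ₖ W)ᴴ) := hρ.conj_isometry <| by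
    rw [conjTranspose_kronecker, ← mul_kronecker_mul, hV, hW, one_kronecker_one]
  apply le_antisymm
  · have hback : ((1 : Matrix (Fin a') (Fin a') ℂ) ⊗ₖ Wᴴ) * (V ⊗ₖ W) = V ⊗ₖ 1 := by
      rw [← mul_kronecker_mul, Matrix.one_mul, hW]
    have hrange : ((1 : Matrix (Fin a') (Fin a') ℂ) ⊗ₖ Wᴴ)ᴴ *
        ((1 : Matrix (Fin a') (Fin a') ℂ) ⊗ₖ Wᴴ) * (V ⊗ₖ W) = V ⊗ₖ W := by
      rw [Matrix.mul_assoc, hback, conjTranspose_one_kronecker, conjTranspose_conjTranspose,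
        ← mul_kronecker_mul, Matrix.one_mul, Matrix.mul_one]
    refine E.mono _ _ _ _ _ _ hσ hρ (Or.inr ⟨haa', V, _, hV,
      locallyBalanced_completedConj (i.pos.trans_le haa') j.pos hW, ?_⟩)
    rw [completedConj_conj hrange, hback]
  · have hfactor : V ⊗ₖ W =
        (V ⊗ₖ (1 : Matrix (Fin b') (Fin b') ℂ)) * ((1 : Matrix (Fin a) (Fin a) ℂ) ⊗ₖ W) := by
      rw [← mul_kronecker_mul, Matrix.mul_one, Matrix.one_mul]
    refine E.mono _ _ _ _ _ _ hρ hσ (Or.inl ⟨haa', V, _, hV,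
      locallyBalanced_one_kronecker_conj hW, ?_⟩)
    rw [hfactor, conjTranspose_mul]
    simp only [Matrix.mul_assoc]
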